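/- Assume F : ℝ^n ⇒ ℝ^n is graphically Lipschitzian of dimension n at (x̄, ȳ) ∈ gph F with transformation mapping Φ and associated Lipschitz continuous mapping f : U → ℝ^n. Then F has the SCD property around (x̄, ȳ), and for every (x, y) ∈ gph F sufficiently close to (x̄, ȳ) one has Sp F(x, y) = {rge[∇Φ(x, y)^{-1}(I; B)] : B ∈ ∇̄f(u)} and Sp* F(x, y) = {rge[S_n ∇Φ(x, y)ᵀ S_nᵀ (I; Bᵀ)] : B ∈ ∇̄f(u)}, where u := π₁(Φ(x, y)), (I; B) denotes the (2n)×n matrix whose upper n×n block is the identity and whose lower block is B, rge denotes the range (column space), and S_n denotes the (2n)×(2n) block matrix [[0, −I], [I, 0]]. -/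

import Mathlib

open Filter Topology Metric Set
open scoped InnerProductSpace RealInnerProductSpace ENNReal NNReal

noncomputable section

namespace SCD

abbrev E (n : ℕ) := EuclideanSpace ℝ (Fin n)
abbrev E2 (n : ℕ) := WithLp 2 (E n × E n)

variable {n : ℕ}

def lp2 (n : ℕ) : E2 n ≃ₗ[ℝ] E n × E n := WithLp.linearEquiv 2 ℝ (E n × E n)
def mk2 (u v : E n) : E2 n := (lp2 n).symm (u, v)
def fst2 (z : E2 n) : E n := (lp2 n z).1
def snd2 (z : E2 n) : E n := (lp2 n z).2

instance : FiniteDimensional ℝ (E2 n) := Module.Finite.equiv (lp2 n).symm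

def tcone {H : Type*} [NormedAddCommGroup H] [NormedSpace ℝ H] (A : Set H) (z : H) : Set H :=
  {w | ∃ t : ℕ → ℝ, ∃ wk : ℕ → H, (∀ k, 0 < t k) ∧ Tendsto t atTop (𝓝 0) ∧
      Tendsto wk atTop (𝓝 w) ∧ ∀ k, z + t k • wk k ∈ A}

def gph (F : E n → Set (E n)) : Set (E2 n) := {z | snd2 z ∈ F (fst2 z)}
def projC (L : Submodule ℝ (E2 n)) : E2 n →L[ℝ] E2 n := L.subtypeL.comp (L.orthogonalProjectionOnto)
def dZ (L₁ L₂ : Submodule ℝ (E2 n)) : ℝ := ‖projC L₁ - projC L₂‖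

def Sneg (n : ℕ) : E2 n ≃ₗ[ℝ] E2 n :=
  (lp2 n).trans (((LinearEquiv.prodComm ℝ (E n) (E n)).trans
    ((LinearEquiv.neg ℝ).prodCongr (LinearEquiv.refl ℝ (E n)))).trans (lp2 n).symm)

def adjS (L : Submodule ℝ (E2 n)) : Submodule ℝ (E2 n) := Lᗮ.map (Sneg n).toLinearMap

/-- `O_F`: the set of points of `gph F` where `F` is graphically smooth of dimension `n`,
i.e. the tangent cone to the graph is an `n`-dimensional linear subspace. -/
def OF (F : E n → Set (E n)) : Set (E2 n) :=
  {z | z ∈ gph F ∧ ∃ L : Submodule ℝ (E2 n),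
    Module.finrank ℝ L = n ∧ (L : Set (E2 n)) = tcone (gph F) z}

/-- The primal generalized derivative `Sp F(x,y)`. -/
def Sp (F : E n → Set (E n)) (z : E2 n) : Set (Submodule ℝ (E2 n)) :=
  {L | Module.finrank ℝ L = n ∧ ∃ (zk : ℕ → E2 n) (Lk : ℕ → Submodule ℝ (E2 n)),
      (∀ k, zk k ∈ gph F ∧ Module.finrank ℝ (Lk k) = n ∧
        ((Lk k : Set (E2 n)) = tcone (gph F) (zk k))) ∧
      Tendsto zk atTop (𝓝 z) ∧ Tendsto (fun k => dZ (Lk k) L) atTop (𝓝 0)}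

/-- The dual generalized derivative `Sp* F(x,y)`. -/
def SpStar (F : E n → Set (E n)) (z : E2 n) : Set (Submodule ℝ (E2 n)) :=
  {L' | ∃ L ∈ Sp F z, L' = adjS L}

/-- `F` has the SCD property at `z ∈ gph F`. -/
def SCDAt (F : E n → Set (E n)) (z : E2 n) : Prop := (Sp F z).Nonempty

/-- `F` has the SCD property around `z ∈ gph F`. -/
def SCDAround (F : E n → Set (E n)) (z : E2 n) : Prop :=
  ∃ δ > (0 : ℝ), ∀ z' ∈ gph F, dist z' z < δ → SCDAt F z'

/-- `Z_n^{reg}`: the subspaces `L ∈ Z_n` such that `(y*, 0) ∈ L` implies `y* = 0`. -/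
def Znreg (n : ℕ) : Set (Submodule ℝ (E2 n)) :=
  {L | Module.finrank ℝ L = n ∧ ∀ y : E n, mk2 y 0 ∈ L → y = 0}

/-- `F` is SCD regular around `z ∈ gph F`. -/
def SCDRegularAround (F : E n → Set (E n)) (z : E2 n) : Prop :=
  SCDAround F z ∧ ∀ L ∈ SpStar F z, L ∈ Znreg n

/-- The set of values `‖y*‖` for `(y*, x*)` in some `L ∈ Sp* F(x,y)` with `‖x*‖ ≤ 1`;
its supremum is the modulus of SCD regularity. -/
def scdregSet (F : E n → Set (E n)) (z : E2 n) : Set ℝ :=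
  {r | ∃ L ∈ SpStar F z, ∃ w : E2 n, w ∈ L ∧ ‖snd2 w‖ ≤ 1 ∧ r = ‖fst2 w‖}

/-- The modulus of SCD regularity `scd reg F(x,y)`. -/
def scdreg (F : E n → Set (E n)) (z : E2 n) : ℝ := sSup (scdregSet F z)

/-- The graph of the outer limiting graphical derivative `D^♯F(x̄,ȳ)`. -/
def DsharpG (F : E n → Set (E n)) (z : E2 n) : Set (E2 n) :=
  {w | ∃ (zk : ℕ → E2 n) (wk : ℕ → E2 n),
    (∀ k, zk k ∈ gph F ∧ wk k ∈ tcone (gph F) (zk k)) ∧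
    Tendsto zk atTop (𝓝 z) ∧ Tendsto wk atTop (𝓝 w)}

/-- The regular (Fréchet) normal cone: the polar of the tangent cone. -/
def regN (A : Set (E2 n)) (z : E2 n) : Set (E2 n) := {w | ∀ v ∈ tcone A z, ⟪w, v⟫_ℝ ≤ 0}

/-- The limiting (Mordukhovich) normal cone. -/
def limN (A : Set (E2 n)) (z : E2 n) : Set (E2 n) :=
  {w | ∃ (zk wk : ℕ → E2 n), (∀ k, zk k ∈ A ∧ wk k ∈ regN A (zk k)) ∧
    Tendsto zk atTop (𝓝 z) ∧ Tendsto wk atTop (𝓝 w)}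

/-- The graph of the limiting coderivative: `(y*, x*)` with `(x*, -y*)` in the limiting
normal cone to the graph. -/
def coderivG (F : E n → Set (E n)) (z : E2 n) : Set (E2 n) :=
  {w | mk2 (snd2 w) (-(fst2 w)) ∈ limN (gph F) z}

/-- The graph of the strict (paratingent) derivative `D_*F(x̄,ȳ)`. -/
def paraconeG (F : E n → Set (E n)) (z : E2 n) : Set (E2 n) :=
  {w | ∃ (t : ℕ → ℝ) (z1 z2 : ℕ → E2 n), (∀ k, 0 < t k) ∧ Tendsto t atTop (𝓝 0) ∧
    (∀ k, z1 k ∈ gph F ∧ z2 k ∈ gph F) ∧ Tendsto z1 atTop (𝓝 z) ∧ Tendsto z2 atTop (𝓝 z) ∧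
    Tendsto (fun k => (t k)⁻¹ • (z2 k - z1 k)) atTop (𝓝 w)}

/-- The B-subdifferential of `f : U → ℝ^n` at `x`. -/
def Bsub (f : E n → E n) (U : Set (E n)) (x : E n) : Set (E n →L[ℝ] E n) :=
  {A | ∃ xk : ℕ → E n, (∀ k, xk k ∈ U ∧ DifferentiableAt ℝ f (xk k)) ∧
    Tendsto xk atTop (𝓝 x) ∧ Tendsto (fun k => fderiv ℝ f (xk k)) atTop (𝓝 A)}

/-- A single-valued map `f` on `U` viewed as a set-valued map. -/
def sv (f : E n → E n) (U : Set (E n)) : E n → Set (E n) := fun x => {y | x ∈ U ∧ y = f x}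

/-- The linear map `u ↦ (u, A u)`. -/
def graphMap (A : E n →L[ℝ] E n) : E n →ₗ[ℝ] E2 n :=
  (lp2 n).symm.toLinearMap.comp (LinearMap.prod LinearMap.id A.toLinearMap)

/-- The subspace `rge(I, A) = {(u, Au) : u ∈ ℝ^n}`. -/
def rgeIA (A : E n →L[ℝ] E n) : Submodule ℝ (E2 n) := LinearMap.range (graphMap A)

/-- The linear map `p ↦ (C p, p)`. -/
def graphMapRev (C : E n →L[ℝ] E n) : E n →ₗ[ℝ] E2 n :=
  (lp2 n).symm.toLinearMap.comp (LinearMap.prod C.toLinearMap LinearMap.id)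

/-- The subspace `rge(C, I) = {(C p, p) : p ∈ ℝ^n}`. -/
def rgeCI (C : E n →L[ℝ] E n) : Submodule ℝ (E2 n) := LinearMap.range (graphMapRev C)

/-- The preimage map `F^{-1}(y)`. -/
def Finv (F : E n → Set (E n)) (y : E n) : Set (E n) := {x | y ∈ F x}

/-- Metric subregularity at `z ∈ gph F` with constant `κ`. -/
def SubregWith (F : E n → Set (E n)) (z : E2 n) (κ : ℝ) : Prop :=
  ∃ δ > (0 : ℝ), ∀ x' : E n, dist x' (fst2 z) < δ →
    EMetric.infEdist x' (Finv F (snd2 z)) ≤ ENNReal.ofReal κ * EMetric.infEdist (snd2 z) (F x')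

/-- `F` is metrically subregular at `z ∈ gph F`. -/
def SubregAt (F : E n → Set (E n)) (z : E2 n) : Prop := ∃ κ, 0 ≤ κ ∧ SubregWith F z κ

/-- The modulus of metric subregularity `subreg F(x,y)`. -/
def subregMod (F : E n → Set (E n)) (z : E2 n) : ℝ := sInf {κ | 0 ≤ κ ∧ SubregWith F z κ}

/-- `F` is strongly metrically subregular at `z ∈ gph F`. -/
def StrSubregAt (F : E n → Set (E n)) (z : E2 n) : Prop :=
  SubregAt F z ∧ ∃ δ > (0 : ℝ), ∀ x' ∈ Finv F (snd2 z), dist x' (fst2 z) < δ → x' = fst2 z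

/-- `F` is strongly metrically subregular around `zb ∈ gph F` (with finite `lsubreg`). -/
def StrSubregAround (F : E n → Set (E n)) (zb : E2 n) : Prop :=
  ∃ δ > (0 : ℝ), (∀ z ∈ gph F, dist z zb < δ → StrSubregAt F z) ∧
    ∃ c : ℝ, ∀ z ∈ gph F, dist z zb < δ → subregMod F z ≤ c

/-- `lsubreg F(x̄,ȳ)`: the limsup of `subreg F(x,y)` over graph points `(x,y) → (x̄,ȳ)`. -/
def lsubreg (F : E n → Set (E n)) (zb : E2 n) : ℝ :=
  Filter.limsup (fun z => subregMod F z) (𝓝[gph F] zb)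

/-- Metric regularity around `zb ∈ gph F` with constant `κ`. -/
def RegWith (F : E n → Set (E n)) (zb : E2 n) (κ : ℝ) : Prop :=
  ∃ δ > (0 : ℝ), ∀ x y : E n, dist x (fst2 zb) < δ → dist y (snd2 zb) < δ →
    EMetric.infEdist x (Finv F y) ≤ ENNReal.ofReal κ * EMetric.infEdist y (F x)

/-- `F` is metrically regular around `zb ∈ gph F`. -/
def MetrRegAround (F : E n → Set (E n)) (zb : E2 n) : Prop := ∃ κ, 0 ≤ κ ∧ RegWith F zb κ

/-- The modulus of metric regularity `reg F(x̄,ȳ)`. -/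
def regMod (F : E n → Set (E n)) (zb : E2 n) : ℝ := sInf {κ | 0 ≤ κ ∧ RegWith F zb κ}

/-- `F` is strongly metrically regular around `zb ∈ gph F`: metrically regular and `F⁻¹`
has a single-valued localization around `(ȳ, x̄)`. -/
def StrRegAround (F : E n → Set (E n)) (zb : E2 n) : Prop :=
  MetrRegAround F zb ∧
  ∃ (X' Y' : Set (E n)) (h : E n → E n), IsOpen X' ∧ IsOpen Y' ∧
    fst2 zb ∈ X' ∧ snd2 zb ∈ Y' ∧ h (snd2 zb) = fst2 zb ∧
    gph F ∩ {w | fst2 w ∈ X' ∧ snd2 w ∈ Y'} = {w | snd2 w ∈ Y' ∧ fst2 w = h (snd2 w)}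

/-- `F` is SCD semismooth* at `zb ∈ gph F`. -/
def SCDSemismoothAt (F : E n → Set (E n)) (zb : E2 n) : Prop :=
  SCDAround F zb ∧ ∀ ε > (0 : ℝ), ∃ δ > (0 : ℝ), ∀ z ∈ gph F, dist z zb ≤ δ →
    ∀ L ∈ SpStar F z, ∀ w : E2 n, w ∈ L →
      |⟪snd2 w, fst2 z - fst2 zb⟫_ℝ - ⟪fst2 w, snd2 z - snd2 zb⟫_ℝ| ≤ ε * ‖z - zb‖ * ‖w‖

/-- `F` is graphically Lipschitzian of dimension `n` at `zb` with transformation mapping `Φ`,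
local inverse `Ψ`, neighborhood `W`, and `K`-Lipschitz map `f : U → ℝ^n`. -/
def GraphLipWith (F : E n → Set (E n)) (zb : E2 n) (Φ Ψ : E2 n → E2 n)
    (W : Set (E2 n)) (U : Set (E n)) (f : E n → E n) (K : ℝ≥0) : Prop :=
  IsOpen W ∧ zb ∈ W ∧ ContDiffOn ℝ 1 Φ W ∧ Set.InjOn Φ W ∧ IsOpen (Φ '' W) ∧
  ContDiffOn ℝ 1 Ψ (Φ '' W) ∧ Set.LeftInvOn Ψ Φ W ∧
  IsOpen U ∧ LipschitzOnWith K f U ∧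
  Φ '' (gph F ∩ W) = {w | fst2 w ∈ U ∧ snd2 w = f (fst2 w)}

/-- `F` is graphically Lipschitzian of dimension `n` at `zb` with transformation mapping `Φ`. -/
def GraphLipAt (F : E n → Set (E n)) (zb : E2 n) (Φ : E2 n → E2 n) : Prop :=
  ∃ Ψ W U f K, GraphLipWith F zb Φ Ψ W U f K

/-- `∇̄^Φ F(x̄,ȳ)`: the `(2n)×n` matrices `Z` (as linear maps `ℝ^n → ℝ^{2n}`) with
`rge Z ∈ Sp F(x̄,ȳ)` and upper block of `∇Φ(x̄,ȳ)Z` equal to the identity. -/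
def BsubPhi (F : E n → Set (E n)) (zb : E2 n) (Φ : E2 n → E2 n) : Set (E n →L[ℝ] E2 n) :=
  {Z | LinearMap.range (Z : E n →ₗ[ℝ] E2 n) ∈ Sp F zb ∧ ∀ p, fst2 (fderiv ℝ Φ zb (Z p)) = p}

/-- A (globally) monotone set-valued map. -/
def MonoMap (T : E n → Set (E n)) : Prop :=
  ∀ x₁ y₁ x₂ y₂, y₁ ∈ T x₁ → y₂ ∈ T x₂ → 0 ≤ ⟪y₁ - y₂, x₁ - x₂⟫_ℝ

/-- `F` is locally maximally monotone at `z ∈ gph F`. -/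
def LocMaxMonoAt (F : E n → Set (E n)) (z : E2 n) : Prop :=
  ∃ X Y : Set (E n), IsOpen X ∧ IsOpen Y ∧ fst2 z ∈ X ∧ snd2 z ∈ Y ∧
    (∀ w₁ ∈ gph F ∩ {w | fst2 w ∈ X ∧ snd2 w ∈ Y},
     ∀ w₂ ∈ gph F ∩ {w | fst2 w ∈ X ∧ snd2 w ∈ Y},
       0 ≤ ⟪snd2 w₁ - snd2 w₂, fst2 w₁ - fst2 w₂⟫_ℝ) ∧
    ∀ T : E n → Set (E n), MonoMap T →
      gph F ∩ {w | fst2 w ∈ X ∧ snd2 w ∈ Y} ⊆ gph T →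
      gph F ∩ {w | fst2 w ∈ X ∧ snd2 w ∈ Y} = gph T ∩ {w | fst2 w ∈ X ∧ snd2 w ∈ Y}

/-- `F` is locally maximally hypomonotone at `z ∈ gph F`:
`γI + F` is locally maximally monotone at `(x, γx + y)` for some `γ ≥ 0`. -/
def LocMaxHypoAt (F : E n → Set (E n)) (z : E2 n) : Prop :=
  ∃ γ : ℝ, 0 ≤ γ ∧ LocMaxMonoAt (fun x => (fun y => γ • x + y) '' F x)
    (mk2 (fst2 z) (γ • fst2 z + snd2 z))

/-- A firmly nonexpansive matrix: `⟨Bv, v⟩ ≥ ‖Bv‖²` for all `v`. -/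
def FirmNonexp (B : E n →L[ℝ] E n) : Prop := ∀ v, ‖B v‖ ^ 2 ≤ ⟪B v, v⟫_ℝ


end SCD

/-!
Near `zb` the chart `Φ` maps `gph F` onto the graph of the Lipschitz map `f`, so for `z ∈ gph F`
near `zb` the tangent cone to `gph F` at `z` is the image under `∇Φ(z)⁻¹` of the tangent cone to
`gph f` at `Φ z`. For Lipschitz `f` the latter is an `n`-dimensional subspace exactly when `f` is
differentiable at `u = π₁(Φ z)`, and it is then `rge(I, ∇f(u))`: the Lipschitz bound rules out
vertical tangent vectors, so an `n`-dimensional tangent subspace is a graph `rge(I, B)`, and since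
normalized secants of `gph f` accumulate in the tangent cone, the linearization error of `B` is
`o(‖h‖)`. Thus `Sp F(z)` consists of the limits of `∇Φ(z_k)⁻¹ rge(I, ∇f(u_k))`. The derivatives
`∇f(u_k)` are bounded by the Lipschitz constant, and the orthogonal projection onto `rge Z` is
`Z (Zᵀ Z)⁻¹ Zᵀ`, continuous in injective `Z`; so these limits are exactly the subspaces
`∇Φ(z)⁻¹ rge(I, B)` with `B ∈ ∇̄f(u)`, a set that is nonempty by Rademacher's theorem. The dual
formula follows from `(A⁻¹ M)^⊥ = Aᵀ M^⊥` and `rge(I, B)^⊥ = S_n⁻¹ rge(I, Bᵀ)`.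
-/

section InnerProductSpace

open ContinuousLinearMap

variable {V H : Type*} [NormedAddCommGroup V] [InnerProductSpace ℝ V] [FiniteDimensional ℝ V]
  [NormedAddCommGroup H] [InnerProductSpace ℝ H] [CompleteSpace H]

lemma isUnit_adjoint_comp_self {Z : V →L[ℝ] H} (hZ : Function.Injective Z) :
    IsUnit (adjoint Z ∘L Z) := by
  have hinj : Function.Injective (adjoint Z ∘L Z) := by
    rwa [coe_comp, adjoint_comp_self_injective_iff]
  exact isUnit_iff_bijective.2 ⟨hinj, LinearMap.injective_iff_surjective.1 hinj⟩

/-- The least-squares formula `Z (Z†Z)⁻¹ Z†` for the projection onto the range of `Z`. -/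
lemma starProjection_range_eq {Z : V →L[ℝ] H} (hZ : Function.Injective Z) :
    (LinearMap.range (Z : V →ₗ[ℝ] H)).starProjection =
      Z ∘L Ring.inverse (adjoint Z ∘L Z) ∘L adjoint Z := by
  obtain ⟨G, hG⟩ := isUnit_adjoint_comp_self hZ
  ext x
  have hGinv : adjoint Z (Z (Ring.inverse (adjoint Z ∘L Z) (adjoint Z x))) = adjoint Z x := by
    rw [← comp_apply (adjoint Z), ← hG, Ring.inverse_unit]
    exact congrArg (fun T : V →L[ℝ] V => T (adjoint Z x)) G.mul_inv
  have hmem : Z (Ring.inverse (adjoint Z ∘L Z) (adjoint Z x)) ∈ LinearMap.range (Z : V →ₗ[ℝ] H) :=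
    LinearMap.mem_range_self (Z : V →ₗ[ℝ] H) _
  rw [comp_apply, comp_apply]
  refine Submodule.eq_starProjection_of_mem_of_inner_eq_zero hmem ?_
  rintro _ ⟨p, rfl⟩
  rw [coe_coe, ← adjoint_inner_left, map_sub, hGinv, sub_self, inner_zero_left]

lemma continuousAt_least_squares {Z : V →L[ℝ] H} (hZ : Function.Injective Z) :
    ContinuousAt (fun Y : V →L[ℝ] H => Y ∘L Ring.inverse (adjoint Y ∘L Y) ∘L adjoint Y) Z := by
  obtain ⟨G, hG⟩ := isUnit_adjoint_comp_self hZ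
  have hadj : Continuous (fun Y : V →L[ℝ] H => adjoint Y) := adjoint.continuous
  have hgram : ContinuousAt (fun Y : V →L[ℝ] H => adjoint Y ∘L Y) Z :=
    hadj.continuousAt.clm_comp continuousAt_id
  have hinv : ContinuousAt (fun Y : V →L[ℝ] H => Ring.inverse (adjoint Y ∘L Y)) Z := by
    have := NormedRing.inverse_continuousAt G
    rw [hG] at this
    exact ContinuousAt.comp (f := fun Y : V →L[ℝ] H => adjoint Y ∘L Y) this hgram
  exact continuousAt_id.clm_comp (hinv.clm_comp hadj.continuousAt)

lemma tendsto_starProjection_range {ι : Type*} {l : Filter ι} {Zk : ι → V →L[ℝ] H}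
    {Z : V →L[ℝ] H} (hZk : Tendsto Zk l (𝓝 Z)) (hinjk : ∀ k, Function.Injective (Zk k))
    (hinj : Function.Injective Z) :
    Tendsto (fun k => (LinearMap.range (Zk k : V →ₗ[ℝ] H)).starProjection) l
      (𝓝 (LinearMap.range (Z : V →ₗ[ℝ] H)).starProjection) := by
  simp only [starProjection_range_eq, hinjk, hinj]
  exact (continuousAt_least_squares hinj).tendsto.comp hZk

lemma orthogonal_comap_equiv (e : H ≃L[ℝ] H) (M : Submodule ℝ H) :
    (M.comap ((e : H →L[ℝ] H) : H →ₗ[ℝ] H))ᗮ = Mᗮ.map (adjoint (e : H →L[ℝ] H) : H →ₗ[ℝ] H) := by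
  ext x
  constructor
  · intro hx
    refine ⟨adjoint (e.symm : H →L[ℝ] H) x, (Submodule.mem_orthogonal _ _).2 fun m hm => ?_, ?_⟩
    · rw [adjoint_inner_right]
      exact (Submodule.mem_orthogonal _ _).1 hx _ (by simpa using hm)
    · rw [coe_coe, ← comp_apply, ← adjoint_comp]
      simp [adjoint_id]
  · rintro ⟨w, hw, rfl⟩
    refine (Submodule.mem_orthogonal _ _).2 fun y hy => ?_
    rw [coe_coe, adjoint_inner_right]
    exact (Submodule.mem_orthogonal _ _).1 hw _ hy

end InnerProductSpace

section Calculus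

variable {H H' : Type*} [NormedAddCommGroup H] [NormedSpace ℝ H]
  [NormedAddCommGroup H'] [NormedSpace ℝ H']

lemma HasFDerivAt.tendsto_inv_smul_sub {Φ : H → H'} {z : H} {Df : H →L[ℝ] H'}
    (hΦ : HasFDerivAt Φ Df z) {t : ℕ → ℝ} {wk : ℕ → H} {w : H} (ht : ∀ k, 0 < t k)
    (ht0 : Tendsto t atTop (𝓝 0)) (hw : Tendsto wk atTop (𝓝 w)) :
    Tendsto (fun k => (t k)⁻¹ • (Φ (z + t k • wk k) - Φ z)) atTop (𝓝 (Df w)) := by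
  refine hΦ.hasFDerivWithinAt.lim (s := univ) ?_ (.of_forall fun _ => mem_univ _) ?_
  · simpa using ht0.smul hw
  · exact hw.congr fun k => by rw [smul_smul, inv_mul_cancel₀ (ht k).ne', one_smul]

lemma fderiv_comp_fderiv_of_leftInverse {φ : H → H'} {g : H' → H} {x : H}
    (hg : DifferentiableAt ℝ g (φ x)) (hφ : DifferentiableAt ℝ φ x)
    (hinv : ∀ᶠ y in 𝓝 x, g (φ y) = y) :
    fderiv ℝ g (φ x) ∘L fderiv ℝ φ x = ContinuousLinearMap.id ℝ H :=
  (hg.hasFDerivAt.comp x hφ.hasFDerivAt).unique ((hasFDerivAt_id x).congr_of_eventuallyEq hinv)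

end Calculus

namespace SCD

variable {n : ℕ}

section Coordinates

-- Instance search does not find this in reasonable time.
instance : ContinuousSMul ℝ (E2 n) := IsBoundedSMul.continuousSMul

@[simp] lemma fst2_mk2 (u v : E n) : fst2 (mk2 u v) = u := rfl
@[simp] lemma snd2_mk2 (u v : E n) : snd2 (mk2 u v) = v := rfl
@[simp] lemma mk2_fst2_snd2 (z : E2 n) : mk2 (fst2 z) (snd2 z) = z := rfl
@[simp] lemma fst2_smul (t : ℝ) (z : E2 n) : fst2 (t • z) = t • fst2 z := rfl
@[simp] lemma snd2_smul (t : ℝ) (z : E2 n) : snd2 (t • z) = t • snd2 z := rfl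
@[simp] lemma Sneg_symm_mk2 (a b : E n) : (Sneg n).symm (mk2 a b) = mk2 b (-a) := rfl

lemma ext2 {z w : E2 n} (h1 : fst2 z = fst2 w) (h2 : snd2 z = snd2 w) : z = w := by
  rw [← mk2_fst2_snd2 z, ← mk2_fst2_snd2 w, h1, h2]

lemma continuous_fst2 : Continuous (fst2 : E2 n → E n) :=
  continuous_fst.comp (WithLp.prodContinuousLinearEquiv 2 ℝ (E n) (E n)).continuous

lemma continuous_snd2 : Continuous (snd2 : E2 n → E n) :=
  continuous_snd.comp (WithLp.prodContinuousLinearEquiv 2 ℝ (E n) (E n)).continuous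

lemma _root_.Filter.Tendsto.mk2 {ι : Type*} {l : Filter ι} {a b : ι → E n} {u v : E n}
    (ha : Tendsto a l (𝓝 u)) (hb : Tendsto b l (𝓝 v)) :
    Tendsto (fun k => mk2 (a k) (b k)) l (𝓝 (mk2 u v)) :=
  ((WithLp.prodContinuousLinearEquiv 2 ℝ (E n) (E n)).symm.continuous.tendsto (u, v)).comp
    (ha.prodMk_nhds hb)

lemma inner_eq_fst2_add_snd2 (z w : E2 n) :
    ⟪z, w⟫_ℝ = ⟪fst2 z, fst2 w⟫_ℝ + ⟪snd2 z, snd2 w⟫_ℝ :=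
  WithLp.prod_inner_apply z w

lemma finrank_E2 : Module.finrank ℝ (E2 n) = n + n := by
  rw [(lp2 n).finrank_eq, Module.finrank_prod, finrank_euclideanSpace_fin]

end Coordinates

section GraphSubspace

open ContinuousLinearMap

lemma graphMap_apply (B : E n →L[ℝ] E n) (p : E n) : graphMap B p = mk2 p (B p) := rfl

lemma graphMap_injective (B : E n →L[ℝ] E n) : Function.Injective (graphMap B) :=
  fun _ _ h => congrArg fst2 h

lemma finrank_rgeIA (B : E n →L[ℝ] E n) : Module.finrank ℝ (rgeIA B) = n := by
  rw [rgeIA, LinearMap.finrank_range_of_inj (graphMap_injective B), finrank_euclideanSpace_fin]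

lemma exists_eq_rgeIA {M : Submodule ℝ (E2 n)} (hM : Module.finrank ℝ M = n)
    (hvert : ∀ v, mk2 0 v ∈ M → v = 0) : ∃ B : E n →L[ℝ] E n, M = rgeIA B := by
  let π : M →ₗ[ℝ] E n := (LinearMap.fst ℝ (E n) (E n)).comp ((lp2 n).toLinearMap ∘ₗ M.subtype)
  have hπ : Function.Injective π := by
    rw [← LinearMap.ker_eq_bot, Submodule.eq_bot_iff]
    rintro ⟨m, hm⟩ (h0 : fst2 m = 0)
    have hsnd : snd2 m = 0 := hvert _ (by rw [← h0]; exact hm)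
    exact Subtype.ext (ext2 h0 hsnd)
  let e : M ≃ₗ[ℝ] E n := LinearEquiv.ofBijective π ⟨hπ,
    (LinearMap.injective_iff_surjective_of_finrank_eq_finrank (by simp [hM])).1 hπ⟩
  let B : E n →L[ℝ] E n := LinearMap.toContinuousLinearMap
    ((LinearMap.snd ℝ (E n) (E n)) ∘ₗ (lp2 n).toLinearMap ∘ₗ M.subtype ∘ₗ e.symm.toLinearMap)
  have hle : rgeIA B ≤ M := by
    rintro _ ⟨p, rfl⟩
    have : graphMap B p = e.symm p := ext2 (e.apply_symm_apply p).symm rfl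
    exact this ▸ (e.symm p).2
  exact ⟨B, (Submodule.eq_of_le_of_finrank_eq hle (by rw [finrank_rgeIA, hM])).symm⟩

def graphCLM (B : E n →L[ℝ] E n) : E n →L[ℝ] E2 n :=
  (WithLp.prodContinuousLinearEquiv 2 ℝ (E n) (E n)).symm.toContinuousLinearMap ∘L
    (ContinuousLinearMap.id ℝ (E n)).prod B

lemma range_graphCLM (B : E n →L[ℝ] E n) :
    LinearMap.range (graphCLM B : E n →ₗ[ℝ] E2 n) = rgeIA B := rfl

lemma continuous_graphCLM : Continuous (graphCLM : (E n →L[ℝ] E n) → E n →L[ℝ] E2 n) :=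
  continuous_const.clm_comp
    ((ContinuousLinearMap.prodₗᵢ ℝ).continuous.comp (continuous_const.prodMk continuous_id))

lemma orthogonal_rgeIA (B : E n →L[ℝ] E n) :
    (rgeIA B)ᗮ = (rgeIA (adjoint B)).map (Sneg n).symm.toLinearMap := by
  refine (Submodule.eq_of_le_of_finrank_eq ?_ ?_).symm
  · rintro _ ⟨_, ⟨q, rfl⟩, rfl⟩
    refine (Submodule.mem_orthogonal _ _).2 ?_
    rintro _ ⟨p, rfl⟩
    change ⟪mk2 p (B p), mk2 (adjoint B q) (-q)⟫_ℝ = 0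
    rw [inner_eq_fst2_add_snd2, fst2_mk2, fst2_mk2, snd2_mk2, snd2_mk2, inner_neg_right,
      adjoint_inner_right, add_neg_cancel]
  · have h := (rgeIA B).finrank_add_finrank_orthogonal
    rw [finrank_rgeIA, finrank_E2] at h
    rw [LinearEquiv.finrank_map_eq, finrank_rgeIA]
    omega

lemma adjS_comap_rgeIA (e : E2 n ≃L[ℝ] E2 n) (B : E n →L[ℝ] E n) :
    adjS ((rgeIA B).comap ((e : E2 n →L[ℝ] E2 n) : E2 n →ₗ[ℝ] E2 n)) =
      (rgeIA (adjoint B)).map ((Sneg n).toLinearMap ∘ₗ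
        (adjoint (e : E2 n →L[ℝ] E2 n)).toLinearMap ∘ₗ (Sneg n).symm.toLinearMap) := by
  rw [adjS, orthogonal_comap_equiv, orthogonal_rgeIA, Submodule.map_comp, Submodule.map_comp]

end GraphSubspace

section Grassmannian

lemma projC_injective : Function.Injective (projC : Submodule ℝ (E2 n) → E2 n →L[ℝ] E2 n) := by
  intro L₁ L₂ h
  have h' : L₁.starProjection = L₂.starProjection := h
  ext x
  rw [← Submodule.starProjection_eq_self_iff, ← Submodule.starProjection_eq_self_iff, h']

lemma eq_of_tendsto_dZ {Lk : ℕ → Submodule ℝ (E2 n)} {L L' : Submodule ℝ (E2 n)}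
    (h : Tendsto (fun k => dZ (Lk k) L) atTop (𝓝 0))
    (h' : Tendsto (fun k => dZ (Lk k) L') atTop (𝓝 0)) : L = L' := by
  have hle : ∀ k, ‖projC L - projC L'‖ ≤ dZ (Lk k) L + dZ (Lk k) L' := fun k =>
    calc ‖projC L - projC L'‖ = ‖(projC (Lk k) - projC L') - (projC (Lk k) - projC L)‖ := by
          abel_nf
      _ ≤ dZ (Lk k) L + dZ (Lk k) L' := (norm_sub_le _ _).trans_eq (add_comm _ _)
  have h0 := le_of_tendsto_of_tendsto' tendsto_const_nhds (by simpa using h.add h') hle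
  exact projC_injective (sub_eq_zero.1 (norm_le_zero_iff.1 h0))

lemma tendsto_dZ_range {Zk : ℕ → E n →L[ℝ] E2 n} {Z : E n →L[ℝ] E2 n}
    (hZk : Tendsto Zk atTop (𝓝 Z)) (hinjk : ∀ k, Function.Injective (Zk k))
    (hinj : Function.Injective Z) :
    Tendsto (fun k => dZ (LinearMap.range (Zk k : E n →ₗ[ℝ] E2 n))
      (LinearMap.range (Z : E n →ₗ[ℝ] E2 n))) atTop (𝓝 0) :=
  tendsto_iff_norm_sub_tendsto_zero.1 (tendsto_starProjection_range hZk hinjk hinj)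

end Grassmannian

section TangentCone

variable {H H' : Type*} [NormedAddCommGroup H] [NormedSpace ℝ H]
  [NormedAddCommGroup H'] [NormedSpace ℝ H']

lemma tendsto_add_smul {z w : H} {t : ℕ → ℝ} {wk : ℕ → H} (ht : Tendsto t atTop (𝓝 0))
    (hw : Tendsto wk atTop (𝓝 w)) : Tendsto (fun k => z + t k • wk k) atTop (𝓝 z) := by
  simpa using tendsto_const_nhds.add (ht.smul hw)

lemma mem_tcone_of_eventually {A : Set H} {z w : H} {t : ℕ → ℝ} {wk : ℕ → H}
    (ht : ∀ k, 0 < t k) (ht0 : Tendsto t atTop (𝓝 0)) (hw : Tendsto wk atTop (𝓝 w))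
    (hmem : ∀ᶠ k in atTop, z + t k • wk k ∈ A) : w ∈ tcone A z := by
  obtain ⟨N, hN⟩ := eventually_atTop.1 hmem
  exact ⟨fun k => t (k + N), fun k => wk (k + N), fun k => ht _,
    ht0.comp (tendsto_add_atTop_nat N), hw.comp (tendsto_add_atTop_nat N),
    fun k => hN _ (Nat.le_add_left N k)⟩

lemma tcone_inter_of_isOpen {A W : Set H} (hW : IsOpen W) {z : H} (hz : z ∈ W) :
    tcone (A ∩ W) z = tcone A z := by
  refine Subset.antisymm (fun w ⟨t, wk, ht, ht0, hw, hmem⟩ => ⟨t, wk, ht, ht0, hw,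
    fun k => (hmem k).1⟩) fun w ⟨t, wk, ht, ht0, hw, hmem⟩ => ?_
  refine mem_tcone_of_eventually ht ht0 hw ?_
  filter_upwards [(tendsto_add_smul ht0 hw).eventually (hW.eventually_mem hz)] with k hk
  exact ⟨hmem k, hk⟩

lemma _root_.HasFDerivAt.mapsTo_tcone {Φ : H → H'} {S : Set H} {z : H} {Df : H →L[ℝ] H'}
    (hΦ : HasFDerivAt Φ Df z) : MapsTo Df (tcone S z) (tcone (Φ '' S) (Φ z)) := by
  rintro w ⟨t, wk, ht, ht0, hwk, hmem⟩
  refine ⟨t, fun k => (t k)⁻¹ • (Φ (z + t k • wk k) - Φ z), ht, ht0,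
    hΦ.tendsto_inv_smul_sub ht ht0 hwk, fun k => ⟨z + t k • wk k, hmem k, ?_⟩⟩
  rw [smul_smul, mul_inv_cancel₀ (ht k).ne', one_smul, add_sub_cancel]

end TangentCone

section LipschitzGraph

variable {U : Set (E n)} {f : E n → E n} {u : E n} {K : ℝ≥0}

lemma add_smul_mem_gph_sv_iff (t : ℝ) (w : E2 n) :
    mk2 u (f u) + t • w ∈ gph (sv f U) ↔
      u + t • fst2 w ∈ U ∧ f u + t • snd2 w = f (u + t • fst2 w) :=
  Iff.rfl

lemma tcone_gph_sv_of_hasFDerivAt (hU : IsOpen U) (hu : u ∈ U) {D : E n →L[ℝ] E n}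
    (hD : HasFDerivAt f D u) : tcone (gph (sv f U)) (mk2 u (f u)) = rgeIA D := by
  ext ζ
  refine ⟨fun ⟨t, wk, ht, ht0, hwk, hmem⟩ => ⟨fst2 ζ, ?_⟩, fun ⟨p, hp⟩ => ?_⟩
  · have hq : ∀ k, (t k)⁻¹ • (f (u + t k • fst2 (wk k)) - f u) = snd2 (wk k) := fun k => by
      rw [← ((add_smul_mem_gph_sv_iff _ _).1 (hmem k)).2, add_sub_cancel_left, smul_smul,
        inv_mul_cancel₀ (ht k).ne', one_smul]
    have hlim := hD.tendsto_inv_smul_sub ht ht0 ((continuous_fst2.tendsto ζ).comp hwk)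
    exact ext2 rfl (tendsto_nhds_unique (hlim.congr hq) ((continuous_snd2.tendsto ζ).comp hwk))
  · subst hp
    change mk2 p (D p) ∈ tcone _ _
    set t : ℕ → ℝ := fun k => 1 / ((k : ℝ) + 1)
    have ht : ∀ k, 0 < t k := fun k => by positivity
    have ht0 : Tendsto t atTop (𝓝 0) := tendsto_one_div_add_atTop_nhds_zero_nat
    have hlim := hD.tendsto_inv_smul_sub ht ht0 (tendsto_const_nhds (x := p))
    refine mem_tcone_of_eventually ht ht0 (tendsto_const_nhds.mk2 hlim) ?_
    filter_upwards [(tendsto_add_smul ht0 tendsto_const_nhds).eventually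
      (hU.eventually_mem hu)] with k hk
    refine (add_smul_mem_gph_sv_iff _ _).2 ⟨hk, ?_⟩
    rw [snd2_mk2, fst2_mk2, smul_smul, mul_inv_cancel₀ (ht k).ne', one_smul, add_sub_cancel]

lemma norm_snd2_le_of_mem_tcone_gph_sv (hf : LipschitzOnWith K f U) (hu : u ∈ U)
    {ζ : E2 n} (hζ : ζ ∈ tcone (gph (sv f U)) (mk2 u (f u))) : ‖snd2 ζ‖ ≤ K * ‖fst2 ζ‖ := by
  obtain ⟨t, wk, ht, ht0, hwk, hmem⟩ := hζ
  have hbound : ∀ k, ‖snd2 (wk k)‖ ≤ K * ‖fst2 (wk k)‖ := fun k => by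
    obtain ⟨hkU, hkf⟩ := (add_smul_mem_gph_sv_iff _ _).1 (hmem k)
    have hd := hf.norm_sub_le hkU hu
    rw [← hkf, add_sub_cancel_left, add_sub_cancel_left, norm_smul, norm_smul,
      Real.norm_of_nonneg (ht k).le, mul_left_comm] at hd
    exact le_of_mul_le_mul_left hd (ht k)
  exact le_of_tendsto_of_tendsto' ((continuous_snd2.tendsto ζ).comp hwk).norm
    (((continuous_fst2.tendsto ζ).comp hwk).norm.const_mul _) hbound

lemma exists_tendsto_secant_mem_tcone_gph_sv (hf : LipschitzOnWith K f U) (hu : u ∈ U)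
    {h : ℕ → E n} (hh : Tendsto h atTop (𝓝 0)) (hne : ∀ j, h j ≠ 0) (hU : ∀ j, u + h j ∈ U) :
    ∃ ζ ∈ tcone (gph (sv f U)) (mk2 u (f u)), ∃ φ : ℕ → ℕ, StrictMono φ ∧
      Tendsto (fun j => ‖h (φ j)‖⁻¹ • mk2 (h (φ j)) (f (u + h (φ j)) - f u)) atTop (𝓝 ζ) := by
  set q : ℕ → E2 n := fun j => ‖h j‖⁻¹ • mk2 (h j) (f (u + h j) - f u)
  have hpos : ∀ j, 0 < ‖h j‖ := fun j => norm_pos_iff.2 (hne j)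
  have hS : IsCompact ((fun p : E n × E n => mk2 p.1 p.2) ''
      (closedBall 0 1 ×ˢ closedBall 0 K)) :=
    ((isCompact_closedBall _ _).prod (isCompact_closedBall _ _)).image
      (WithLp.prodContinuousLinearEquiv 2 ℝ (E n) (E n)).symm.continuous
  have hqS : ∀ j, q j ∈ (fun p : E n × E n => mk2 p.1 p.2) ''
      (closedBall 0 1 ×ˢ closedBall 0 K) := fun j => by
    refine ⟨(‖h j‖⁻¹ • h j, ‖h j‖⁻¹ • (f (u + h j) - f u)), ⟨?_, ?_⟩, rfl⟩
    · rw [mem_closedBall_zero_iff, norm_smul, norm_inv, norm_norm, inv_mul_cancel₀ (hpos j).ne']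
    · rw [mem_closedBall_zero_iff, norm_smul, norm_inv, norm_norm, inv_mul_le_iff₀ (hpos j),
        mul_comm]
      simpa using hf.norm_sub_le (hU j) hu
  obtain ⟨ζ, -, φ, hφ, hlim⟩ := tendsto_subseq_of_bounded hS.isBounded hqS
  refine ⟨ζ, mem_tcone_of_eventually (fun j => hpos (φ j))
    (by simpa using (hh.comp hφ.tendsto_atTop).norm) hlim (.of_forall fun j => ?_), φ, hφ,
    hlim⟩
  refine (add_smul_mem_gph_sv_iff _ _).2 ⟨?_, ?_⟩ <;>
    simp only [Function.comp_apply, q, fst2_smul, snd2_smul, fst2_mk2, snd2_mk2, smul_smul,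
      mul_inv_cancel₀ (hpos (φ j)).ne', one_smul, add_sub_cancel, hU]

lemma hasFDerivAt_of_tcone_gph_sv_subset (hU : IsOpen U) (hf : LipschitzOnWith K f U)
    (hu : u ∈ U) {B : E n →L[ℝ] E n} (hB : tcone (gph (sv f U)) (mk2 u (f u)) ⊆ rgeIA B) :
    HasFDerivAt f B u := by
  rw [hasFDerivAt_iff_isLittleO_nhds_zero, Asymptotics.isLittleO_iff]
  intro c hc
  by_contra hfail
  have hnear : ∀ᶠ h in 𝓝 (0 : E n), u + h ∈ U :=
    (continuous_const_add u).continuousAt.preimage_mem_nhds (by simpa using hU.mem_nhds hu)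
  obtain ⟨h, hh, hbad⟩ :=
    exists_seq_forall_of_frequently ((not_eventually.1 hfail).and_eventually hnear)
  have hne : ∀ j, h j ≠ 0 := fun j hj => (hbad j).1 (by simp [hj])
  obtain ⟨ζ, hζ, φ, -, hlim⟩ :=
    exists_tendsto_secant_mem_tcone_gph_sv hf hu hh hne fun j => (hbad j).2
  have hgap : ∀ j, c ≤ ‖snd2 (‖h (φ j)‖⁻¹ • mk2 (h (φ j)) (f (u + h (φ j)) - f u)) -
      B (fst2 (‖h (φ j)‖⁻¹ • mk2 (h (φ j)) (f (u + h (φ j)) - f u)))‖ := fun j => by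
    have hpos : 0 < ‖h (φ j)‖ := norm_pos_iff.2 (hne _)
    rw [snd2_smul, fst2_smul, snd2_mk2, fst2_mk2, map_smul, ← smul_sub, norm_smul, norm_inv,
      norm_norm, le_inv_mul_iff₀ hpos, mul_comm]
    exact (not_le.1 (hbad (φ j)).1).le
  have hdefect : Continuous fun z : E2 n => ‖snd2 z - B (fst2 z)‖ :=
    (continuous_snd2.sub (B.continuous.comp continuous_fst2)).norm
  have hle := ge_of_tendsto ((hdefect.tendsto ζ).comp hlim) (.of_forall hgap)
  obtain ⟨p, rfl⟩ := hB hζ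
  exact hc.not_ge (by simpa [graphMap_apply] using hle)

lemma tcone_gph_sv_eq_iff (hU : IsOpen U) (hf : LipschitzOnWith K f U) (hu : u ∈ U)
    (M : Submodule ℝ (E2 n)) :
    (Module.finrank ℝ M = n ∧ (M : Set (E2 n)) = tcone (gph (sv f U)) (mk2 u (f u))) ↔
      ∃ D : E n →L[ℝ] E n, HasFDerivAt f D u ∧ M = rgeIA D := by
  constructor
  · rintro ⟨hM, hMt⟩
    obtain ⟨B, rfl⟩ := exists_eq_rgeIA hM fun v hv => by
      simpa using norm_snd2_le_of_mem_tcone_gph_sv hf hu (hMt ▸ hv : mk2 0 v ∈ _)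
    exact ⟨B, hasFDerivAt_of_tcone_gph_sv_subset hU hf hu hMt.ge, rfl⟩
  · rintro ⟨D, hD, rfl⟩
    exact ⟨finrank_rgeIA D, (tcone_gph_sv_of_hasFDerivAt hU hu hD).symm⟩

end LipschitzGraph

section BSubdifferential

variable {U : Set (E n)} {f : E n → E n} {K : ℝ≥0}

lemma exists_mem_Bsub_of_tendsto (hU : IsOpen U) (hf : LipschitzOnWith K f U) {x : E n}
    {xk : ℕ → E n} (hxU : ∀ k, xk k ∈ U) (hdiff : ∀ k, DifferentiableAt ℝ f (xk k))
    (hx : Tendsto xk atTop (𝓝 x)) :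
    ∃ B ∈ Bsub f U x, ∃ φ : ℕ → ℕ, StrictMono φ ∧
      Tendsto (fun j => fderiv ℝ f (xk (φ j))) atTop (𝓝 B) := by
  have hbound : ∀ k, fderiv ℝ f (xk k) ∈ closedBall (0 : E n →L[ℝ] E n) K := fun k =>
    mem_closedBall_zero_iff.2 ((hdiff k).hasFDerivAt.le_of_lipschitzOn (hU.mem_nhds (hxU k)) hf)
  obtain ⟨B, -, φ, hφ, hB⟩ := tendsto_subseq_of_bounded isBounded_closedBall hbound
  exact ⟨B, ⟨xk ∘ φ, fun j => ⟨hxU _, hdiff _⟩, hx.comp hφ.tendsto_atTop, hB⟩, φ, hφ, hB⟩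

lemma Bsub_nonempty (hU : IsOpen U) (hf : LipschitzOnWith K f U) {u : E n} (hu : u ∈ U) :
    (Bsub f U u).Nonempty := by
  -- Rademacher: the differentiability points of `f` are dense in `U`.
  have hdense := MeasureTheory.Measure.dense_of_ae
    (hf.ae_differentiableWithinAt_of_mem (μ := MeasureTheory.volume))
  have hcl : u ∈ closure {x | x ∈ U ∧ DifferentiableAt ℝ f x} := by
    refine closure_mono ?_ (hU.inter_closure ⟨hu, hdense u⟩)
    exact fun x ⟨hxU, hx⟩ => ⟨hxU, (hx hxU).differentiableAt (hU.mem_nhds hxU)⟩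
  obtain ⟨xk, hxk, hx⟩ := mem_closure_iff_seq_limit.1 hcl
  obtain ⟨B, hB, -⟩ := exists_mem_Bsub_of_tendsto hU hf (fun k => (hxk k).1)
    (fun k => (hxk k).2) hx
  exact ⟨B, hB⟩

end BSubdifferential

section GraphLipWith

variable {F : E n → Set (E n)} {zb : E2 n} {Φ Ψ : E2 n → E2 n} {W : Set (E2 n)}
  {U : Set (E n)} {f : E n → E n} {K : ℝ≥0} {z : E2 n}

namespace GraphLipWith

lemma isOpen_W (hgl : GraphLipWith F zb Φ Ψ W U f K) : IsOpen W := hgl.1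

lemma mem_W (hgl : GraphLipWith F zb Φ Ψ W U f K) : zb ∈ W := hgl.2.1

lemma contDiffOn_Φ (hgl : GraphLipWith F zb Φ Ψ W U f K) : ContDiffOn ℝ 1 Φ W := hgl.2.2.1

lemma isOpen_image (hgl : GraphLipWith F zb Φ Ψ W U f K) : IsOpen (Φ '' W) := hgl.2.2.2.2.1

lemma contDiffOn_Ψ (hgl : GraphLipWith F zb Φ Ψ W U f K) : ContDiffOn ℝ 1 Ψ (Φ '' W) :=
  hgl.2.2.2.2.2.1

lemma leftInvOn (hgl : GraphLipWith F zb Φ Ψ W U f K) : LeftInvOn Ψ Φ W := hgl.2.2.2.2.2.2.1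

lemma isOpen_U (hgl : GraphLipWith F zb Φ Ψ W U f K) : IsOpen U := hgl.2.2.2.2.2.2.2.1

lemma lipschitzOnWith (hgl : GraphLipWith F zb Φ Ψ W U f K) : LipschitzOnWith K f U :=
  hgl.2.2.2.2.2.2.2.2.1

lemma image_gph_inter (hgl : GraphLipWith F zb Φ Ψ W U f K) :
    Φ '' (gph F ∩ W) = gph (sv f U) :=
  hgl.2.2.2.2.2.2.2.2.2

lemma differentiableAt_Φ (hgl : GraphLipWith F zb Φ Ψ W U f K) (hz : z ∈ W) :
    DifferentiableAt ℝ Φ z :=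
  (hgl.contDiffOn_Φ.differentiableOn one_ne_zero z hz).differentiableAt (hgl.isOpen_W.mem_nhds hz)

lemma differentiableAt_Ψ (hgl : GraphLipWith F zb Φ Ψ W U f K) (hz : z ∈ W) :
    DifferentiableAt ℝ Ψ (Φ z) :=
  (hgl.contDiffOn_Ψ.differentiableOn one_ne_zero _ ⟨z, hz, rfl⟩).differentiableAt
    (hgl.isOpen_image.mem_nhds ⟨z, hz, rfl⟩)

lemma fderiv_Ψ_comp_fderiv_Φ (hgl : GraphLipWith F zb Φ Ψ W U f K) (hz : z ∈ W) :
    fderiv ℝ Ψ (Φ z) ∘L fderiv ℝ Φ z = ContinuousLinearMap.id ℝ (E2 n) :=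
  fderiv_comp_fderiv_of_leftInverse (hgl.differentiableAt_Ψ hz) (hgl.differentiableAt_Φ hz)
    ((hgl.isOpen_W.eventually_mem hz).mono fun _ hy => hgl.leftInvOn hy)

lemma fderiv_Φ_comp_fderiv_Ψ (hgl : GraphLipWith F zb Φ Ψ W U f K) (hz : z ∈ W) :
    fderiv ℝ Φ z ∘L fderiv ℝ Ψ (Φ z) = ContinuousLinearMap.id ℝ (E2 n) := by
  have hz' : Ψ (Φ z) = z := hgl.leftInvOn hz
  have hΦ : DifferentiableAt ℝ Φ (Ψ (Φ z)) := by rw [hz']; exact hgl.differentiableAt_Φ hz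
  have h := fderiv_comp_fderiv_of_leftInverse hΦ (hgl.differentiableAt_Ψ hz)
    ((hgl.isOpen_image.eventually_mem ⟨z, hz, rfl⟩).mono fun _ hw =>
      hgl.leftInvOn.rightInvOn_image hw)
  rwa [hz'] at h

def fderivEquiv (hgl : GraphLipWith F zb Φ Ψ W U f K) (hz : z ∈ W) : E2 n ≃L[ℝ] E2 n :=
  ContinuousLinearEquiv.equivOfInverse (fderiv ℝ Φ z) (fderiv ℝ Ψ (Φ z))
    (fun x => congrArg (· x) (hgl.fderiv_Ψ_comp_fderiv_Φ hz))
    (fun x => congrArg (· x) (hgl.fderiv_Φ_comp_fderiv_Ψ hz))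

lemma mapsTo_gph_sv (hgl : GraphLipWith F zb Φ Ψ W U f K) (hz : z ∈ gph F) (hzW : z ∈ W) :
    Φ z ∈ gph (sv f U) :=
  hgl.image_gph_inter ▸ mem_image_of_mem Φ ⟨hz, hzW⟩

lemma image_tcone (hgl : GraphLipWith F zb Φ Ψ W U f K) (hzW : z ∈ W) :
    fderiv ℝ Φ z '' tcone (gph F) z = tcone (gph (sv f U)) (Φ z) := by
  rw [← tcone_inter_of_isOpen hgl.isOpen_W hzW]
  refine Subset.antisymm ?_ fun w hw => ?_
  · rw [← hgl.image_gph_inter]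
    exact (hgl.differentiableAt_Φ hzW).hasFDerivAt.mapsTo_tcone.image_subset
  · have h := (hgl.differentiableAt_Ψ hzW).hasFDerivAt.mapsTo_tcone hw
    rw [← hgl.image_gph_inter, hgl.leftInvOn.image_image' inter_subset_right,
      hgl.leftInvOn hzW] at h
    exact ⟨_, h, (hgl.fderivEquiv hzW).apply_symm_apply w⟩

lemma tcone_eq_iff (hgl : GraphLipWith F zb Φ Ψ W U f K) (hz : z ∈ gph F) (hzW : z ∈ W)
    (L : Submodule ℝ (E2 n)) :
    (Module.finrank ℝ L = n ∧ (L : Set (E2 n)) = tcone (gph F) z) ↔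
      ∃ D : E n →L[ℝ] E n, HasFDerivAt f D (fst2 (Φ z)) ∧
        L = (rgeIA D).comap (fderiv ℝ Φ z : E2 n →ₗ[ℝ] E2 n) := by
  set A : E2 n →ₗ[ℝ] E2 n := (fderiv ℝ Φ z : E2 n →ₗ[ℝ] E2 n)
  have hA : Function.Injective A := (hgl.fderivEquiv hzW).injective
  have hAsurj : Function.Surjective A := (hgl.fderivEquiv hzW).surjective
  have hrank : Module.finrank ℝ (L.map A) = Module.finrank ℝ L :=
    LinearEquiv.finrank_map_eq (hgl.fderivEquiv hzW).toLinearEquiv L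
  have hΦz := hgl.mapsTo_gph_sv hz hzW
  have hΦz_eq : Φ z = mk2 (fst2 (Φ z)) (f (fst2 (Φ z))) := ext2 rfl hΦz.2
  calc (Module.finrank ℝ L = n ∧ (L : Set (E2 n)) = tcone (gph F) z)
      ↔ Module.finrank ℝ (L.map A) = n ∧
          (L.map A : Set (E2 n)) = tcone (gph (sv f U)) (mk2 (fst2 (Φ z)) (f (fst2 (Φ z)))) := by
        rw [hrank, ← hΦz_eq, ← hgl.image_tcone hzW, Submodule.map_coe]
        exact and_congr_right' (image_injective.2 hA).eq_iff.symm
    _ ↔ ∃ D : E n →L[ℝ] E n, HasFDerivAt f D (fst2 (Φ z)) ∧ L.map A = rgeIA D :=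
        tcone_gph_sv_eq_iff hgl.isOpen_U hgl.lipschitzOnWith hΦz.1 _
    _ ↔ _ := by
        refine exists_congr fun D => and_congr_right' ⟨fun h => ?_, fun h => ?_⟩
        · rw [← h, Submodule.comap_map_eq_of_injective hA]
        · rw [h, Submodule.map_comap_eq_of_surjective hAsurj]

lemma comap_rgeIA_eq_range (hgl : GraphLipWith F zb Φ Ψ W U f K) (hz : z ∈ W)
    (D : E n →L[ℝ] E n) :
    (rgeIA D).comap (fderiv ℝ Φ z : E2 n →ₗ[ℝ] E2 n) =
      LinearMap.range ((fderiv ℝ Ψ (Φ z) ∘L graphCLM D : E n →L[ℝ] E2 n) : E n →ₗ[ℝ] E2 n) := by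
  rw [← range_graphCLM, ContinuousLinearMap.toLinearMap_comp, LinearMap.range_comp]
  exact Submodule.comap_equiv_eq_map_symm (hgl.fderivEquiv hz).toLinearEquiv _

lemma injective_fderiv_Ψ_comp_graphCLM (hgl : GraphLipWith F zb Φ Ψ W U f K) (hz : z ∈ W)
    (D : E n →L[ℝ] E n) : Function.Injective (fderiv ℝ Ψ (Φ z) ∘L graphCLM D) :=
  (hgl.fderivEquiv hz).symm.injective.comp (graphMap_injective D)

lemma finrank_comap_rgeIA (hgl : GraphLipWith F zb Φ Ψ W U f K) (hz : z ∈ W)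
    (D : E n →L[ℝ] E n) :
    Module.finrank ℝ ((rgeIA D).comap (fderiv ℝ Φ z : E2 n →ₗ[ℝ] E2 n)) = n := by
  rw [hgl.comap_rgeIA_eq_range hz, LinearMap.finrank_range_of_inj
    (hgl.injective_fderiv_Ψ_comp_graphCLM hz D), finrank_euclideanSpace_fin]

lemma continuousAt_fderiv_Ψ (hgl : GraphLipWith F zb Φ Ψ W U f K) (hz : z ∈ W) :
    ContinuousAt (fun y => fderiv ℝ Ψ (Φ y)) z :=
  ((hgl.contDiffOn_Ψ.continuousOn_fderiv_of_isOpen hgl.isOpen_image le_rfl).continuousAt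
    (hgl.isOpen_image.mem_nhds ⟨z, hz, rfl⟩)).comp (hgl.differentiableAt_Φ hz).continuousAt

lemma tendsto_dZ_comap (hgl : GraphLipWith F zb Φ Ψ W U f K) {zk : ℕ → E2 n}
    (hzkW : ∀ k, zk k ∈ W) (hzW : z ∈ W) (hzk : Tendsto zk atTop (𝓝 z))
    {Dk : ℕ → E n →L[ℝ] E n} {B : E n →L[ℝ] E n} (hDk : Tendsto Dk atTop (𝓝 B)) :
    Tendsto (fun k => dZ ((rgeIA (Dk k)).comap (fderiv ℝ Φ (zk k) : E2 n →ₗ[ℝ] E2 n))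
      ((rgeIA B).comap (fderiv ℝ Φ z : E2 n →ₗ[ℝ] E2 n))) atTop (𝓝 0) := by
  simp only [hgl.comap_rgeIA_eq_range, hzkW, hzW]
  refine tendsto_dZ_range ?_ (fun k => ?_) ?_
  · exact (isBoundedBilinearMap_comp.continuous.tendsto _).comp
      (((hgl.continuousAt_fderiv_Ψ hzW).tendsto.comp hzk).prodMk_nhds
        ((continuous_graphCLM.tendsto B).comp hDk))
  · exact hgl.injective_fderiv_Ψ_comp_graphCLM (hzkW k) _
  · exact hgl.injective_fderiv_Ψ_comp_graphCLM hzW _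

lemma mem_Sp_of_mem_Bsub (hgl : GraphLipWith F zb Φ Ψ W U f K) (hz : z ∈ gph F) (hzW : z ∈ W)
    {B : E n →L[ℝ] E n} (hB : B ∈ Bsub f U (fst2 (Φ z))) :
    (rgeIA B).comap (fderiv ℝ Φ z : E2 n →ₗ[ℝ] E2 n) ∈ Sp F z := by
  obtain ⟨xk, hxk, hx, hDk⟩ := hB
  have hlift : ∀ k, mk2 (xk k) (f (xk k)) ∈ Φ '' (gph F ∩ W) := fun k =>
    hgl.image_gph_inter ▸ ⟨(hxk k).1, rfl⟩
  choose zk hzk hΦzk using hlift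
  have hΦz := hgl.mapsTo_gph_sv hz hzW
  have hfx : Tendsto (fun k => f (xk k)) atTop (𝓝 (f (fst2 (Φ z)))) :=
    ((hgl.lipschitzOnWith.continuousOn.continuousAt (hgl.isOpen_U.mem_nhds hΦz.1)).tendsto).comp hx
  have hgraph : Tendsto (fun k => mk2 (xk k) (f (xk k))) atTop (𝓝 (Φ z)) := by
    rw [show Φ z = mk2 (fst2 (Φ z)) (f (fst2 (Φ z))) from ext2 rfl hΦz.2]
    exact hx.mk2 hfx
  have hzk_lim : Tendsto zk atTop (𝓝 z) := by
    have h := (hgl.differentiableAt_Ψ hzW).continuousAt.tendsto.comp hgraph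
    rw [hgl.leftInvOn hzW] at h
    exact h.congr fun k => by simp only [Function.comp_apply, ← hΦzk k, hgl.leftInvOn (hzk k).2]
  have hderiv : ∀ k, HasFDerivAt f (fderiv ℝ f (xk k)) (fst2 (Φ (zk k))) := fun k => by
    rw [hΦzk k, fst2_mk2]
    exact (hxk k).2.hasFDerivAt
  refine ⟨hgl.finrank_comap_rgeIA hzW B, zk,
    fun k => (rgeIA (fderiv ℝ f (xk k))).comap (fderiv ℝ Φ (zk k) : E2 n →ₗ[ℝ] E2 n),
    fun k => ⟨(hzk k).1, (hgl.tcone_eq_iff (hzk k).1 (hzk k).2 _).2 ⟨_, hderiv k, rfl⟩⟩,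
    hzk_lim, hgl.tendsto_dZ_comap (fun k => (hzk k).2) hzW hzk_lim hDk⟩

lemma exists_mem_Bsub_of_mem_Sp (hgl : GraphLipWith F zb Φ Ψ W U f K) (hzW : z ∈ W)
    {L : Submodule ℝ (E2 n)} (hL : L ∈ Sp F z) :
    ∃ B ∈ Bsub f U (fst2 (Φ z)), L = (rgeIA B).comap (fderiv ℝ Φ z : E2 n →ₗ[ℝ] E2 n) := by
  obtain ⟨-, zk₀, Lk₀, hk₀, hzk₀, hdZ₀⟩ := hL
  obtain ⟨N, hN⟩ := eventually_atTop.1 (hzk₀.eventually (hgl.isOpen_W.eventually_mem hzW))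
  set zk := fun k => zk₀ (k + N)
  have hzkW : ∀ k, zk k ∈ W := fun k => hN _ (Nat.le_add_left N k)
  have hzk : Tendsto zk atTop (𝓝 z) := hzk₀.comp (tendsto_add_atTop_nat N)
  choose D hD hLD using fun k =>
    (hgl.tcone_eq_iff (hk₀ (k + N)).1 (hzkW k) (Lk₀ (k + N))).1 (hk₀ (k + N)).2
  have hxk : Tendsto (fun k => fst2 (Φ (zk k))) atTop (𝓝 (fst2 (Φ z))) :=
    (continuous_fst2.tendsto _).comp ((hgl.differentiableAt_Φ hzW).continuousAt.tendsto.comp hzk)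
  obtain ⟨B, hB, φ, hφ, hDB⟩ := exists_mem_Bsub_of_tendsto hgl.isOpen_U hgl.lipschitzOnWith
    (fun k => (hgl.mapsTo_gph_sv (hk₀ (k + N)).1 (hzkW k)).1) (fun k => (hD k).differentiableAt)
    hxk
  refine ⟨B, hB, eq_of_tendsto_dZ (Lk := fun j => Lk₀ (φ j + N))
    ((hdZ₀.comp (tendsto_add_atTop_nat N)).comp hφ.tendsto_atTop) ?_⟩
  refine (hgl.tendsto_dZ_comap (fun j => hzkW (φ j)) hzW (hzk.comp hφ.tendsto_atTop)
    (hDB.congr fun j => (hD (φ j)).fderiv)).congr fun j => (congrArg (dZ · _) (hLD (φ j))).symm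

lemma Sp_eq (hgl : GraphLipWith F zb Φ Ψ W U f K) (hz : z ∈ gph F) (hzW : z ∈ W) :
    Sp F z = {L | ∃ B ∈ Bsub f U (fst2 (Φ z)),
      L = Submodule.comap ((fderiv ℝ Φ z) : E2 n →ₗ[ℝ] E2 n) (rgeIA B)} :=
  Subset.antisymm (fun _ hL => hgl.exists_mem_Bsub_of_mem_Sp hzW hL)
    fun _ ⟨_, hB, hL⟩ => hL ▸ hgl.mem_Sp_of_mem_Bsub hz hzW hB

lemma SpStar_eq (hgl : GraphLipWith F zb Φ Ψ W U f K) (hz : z ∈ gph F) (hzW : z ∈ W) :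
    SpStar F z = {L | ∃ B ∈ Bsub f U (fst2 (Φ z)),
      L = Submodule.map ((Sneg n).toLinearMap ∘ₗ
        (ContinuousLinearMap.adjoint (fderiv ℝ Φ z)).toLinearMap ∘ₗ
        (Sneg n).symm.toLinearMap) (rgeIA (ContinuousLinearMap.adjoint B))} := by
  ext L'
  simp only [SpStar, hgl.Sp_eq hz hzW, mem_ofPred_eq]
  constructor
  · rintro ⟨_, ⟨B, hB, rfl⟩, rfl⟩
    exact ⟨B, hB, adjS_comap_rgeIA (hgl.fderivEquiv hzW) B⟩
  · rintro ⟨B, hB, rfl⟩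
    exact ⟨_, ⟨B, hB, rfl⟩, (adjS_comap_rgeIA (hgl.fderivEquiv hzW) B).symm⟩

end GraphLipWith

end GraphLipWith

theorem stmt9_general (n : ℕ) (F : E n → Set (E n)) (zb : E2 n)
    (Φ Ψ : E2 n → E2 n) (W : Set (E2 n)) (U : Set (E n)) (f : E n → E n) (K : ℝ≥0)
    (hgl : GraphLipWith F zb Φ Ψ W U f K) :
    SCDAround F zb ∧ ∃ δ > (0 : ℝ), ∀ z ∈ gph F, dist z zb < δ →
      (Sp F z = {L | ∃ B ∈ Bsub f U (fst2 (Φ z)),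
          L = Submodule.comap ((fderiv ℝ Φ z) : E2 n →ₗ[ℝ] E2 n) (rgeIA B)} ∧
       SpStar F z = {L | ∃ B ∈ Bsub f U (fst2 (Φ z)),
          L = Submodule.map ((Sneg n).toLinearMap ∘ₗ
            (ContinuousLinearMap.adjoint (fderiv ℝ Φ z)).toLinearMap ∘ₗ
            (Sneg n).symm.toLinearMap) (rgeIA (ContinuousLinearMap.adjoint B))}) := by
  obtain ⟨δ, hδ, hball⟩ := Metric.isOpen_iff.1 hgl.isOpen_W zb hgl.mem_W
  have hW : ∀ z, dist z zb < δ → z ∈ W := fun z hz => hball (mem_ball.2 hz)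
  refine ⟨⟨δ, hδ, fun z hz hzδ => ?_⟩, δ, hδ, fun z hz hzδ =>
    ⟨hgl.Sp_eq hz (hW z hzδ), hgl.SpStar_eq hz (hW z hzδ)⟩⟩
  obtain ⟨B, hB⟩ := Bsub_nonempty hgl.isOpen_U hgl.lipschitzOnWith
    (hgl.mapsTo_gph_sv hz (hW z hzδ)).1
  exact ⟨_, hgl.mem_Sp_of_mem_Bsub hz (hW z hzδ) hB⟩

theorem stmt9 (n : ℕ) (F : E n → Set (E n)) (zb : E2 n) (hzb : zb ∈ gph F)
    (Φ Ψ : E2 n → E2 n) (W : Set (E2 n)) (U : Set (E n)) (f : E n → E n) (K : ℝ≥0)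
    (hgl : GraphLipWith F zb Φ Ψ W U f K) :
    SCDAround F zb ∧ ∃ δ > (0 : ℝ), ∀ z ∈ gph F, dist z zb < δ →
      (Sp F z = {L | ∃ B ∈ Bsub f U (fst2 (Φ z)),
          L = Submodule.comap ((fderiv ℝ Φ z) : E2 n →ₗ[ℝ] E2 n) (rgeIA B)} ∧
       SpStar F z = {L | ∃ B ∈ Bsub f U (fst2 (Φ z)),
          L = Submodule.map ((Sneg n).toLinearMap ∘ₗ
            (ContinuousLinearMap.adjoint (fderiv ℝ Φ z)).toLinearMap ∘ₗ
            (Sneg n).symm.toLinearMap) (rgeIA (ContinuousLinearMap.adjoint B))}) :=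
  stmt9_general n F zb Φ Ψ W U f K hgl

end SCD
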